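/- arXiv:math/0401260 — 6 statements merged into one kernel-verified Lean document; each statement's English description precedes it below -/
import Mathlib

section
/- Fix nonzero finite-dimensional complex vector spaces V and W, an integer m ≥ 1, an index i ∈ {1, …, m}, positive integers ω_j for all j ≠ i, and dimensions k_1, …, k_m. There exists a positive integer N such that for every integer ω_i ≥ N and every configuration K_1, …, K_m of subspaces of V⊗W with dim K_j = k_j for all j: if {K_j} is ℘_ω-semistable (with weights ω_1, …, ω_m), then the single-member configuration (K_i) with weight 1 is ℘-semistable, i.e. for every nonzero proper subspace H ⊊ V one has (1/dim H)·dim(K_i ∩ (H⊗W)) ≤ (1/dim V)·dim K_i. -/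
open scoped TensorProduct
open Module

noncomputable section

variable {V : Type*} [AddCommGroup V] [Module ℂ V]

/-- The image of `H ⊗ W` in `V ⊗ W` under the canonical inclusion, for `H ⊆ V`. -/
def tensorSub (W : Type*) [AddCommGroup W] [Module ℂ W] (H : Submodule ℂ V) :
    Submodule ℂ (V ⊗[ℂ] W) :=
  LinearMap.range (TensorProduct.map H.subtype (LinearMap.id : W →ₗ[ℂ] W))

variable {W : Type*} [AddCommGroup W] [Module ℂ W]

/-- `℘_ω(H) = (1/dim H)·Σ_i ω_i·dim(K_i ∩ (H⊗W))`. -/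
def slopeConfig {m : ℕ} (ω : Fin m → ℕ) (K : Fin m → Submodule ℂ (V ⊗[ℂ] W))
    (H : Submodule ℂ V) : ℚ :=
  (∑ i, (ω i : ℚ) * (finrank ℂ ↥(K i ⊓ tensorSub W H) : ℚ)) / (finrank ℂ ↥H : ℚ)

/-- `℘_ω({K_i}) = (1/dim V)·Σ_i ω_i·dim K_i`. -/
def totalConfig {m : ℕ} (ω : Fin m → ℕ) (K : Fin m → Submodule ℂ (V ⊗[ℂ] W)) : ℚ :=
  (∑ i, (ω i : ℚ) * (finrank ℂ ↥(K i) : ℚ)) / (finrank ℂ V : ℚ)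

/-- The configuration `{K_i}` is `℘_ω`-semistable. -/
def ConfigSemistable {m : ℕ} (ω : Fin m → ℕ) (K : Fin m → Submodule ℂ (V ⊗[ℂ] W)) : Prop :=
  ∀ H : Submodule ℂ V, H ≠ ⊥ → H ≠ ⊤ → slopeConfig ω K H ≤ totalConfig ω K

theorem stmt_4 (V W : Type*) [AddCommGroup V] [Module ℂ V] [FiniteDimensional ℂ V] [Nontrivial V]
    [AddCommGroup W] [Module ℂ W] [FiniteDimensional ℂ W] [Nontrivial W]
    (m : ℕ) (hm : 1 ≤ m) (i : Fin m) (ω : Fin m → ℕ) (hω : ∀ j, j ≠ i → 0 < ω j)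
    (k : Fin m → ℕ) :
    ∃ N : ℕ, 0 < N ∧ ∀ ωi : ℕ, N ≤ ωi →
      ∀ K : Fin m → Submodule ℂ (V ⊗[ℂ] W), (∀ j, finrank ℂ ↥(K j) = k j) →
        ConfigSemistable (Function.update ω i ωi) K →
        ∀ H : Submodule ℂ V, H ≠ ⊥ → H ≠ ⊤ →
          (finrank ℂ ↥(K i ⊓ tensorSub W H) : ℚ) / (finrank ℂ ↥H : ℚ) ≤
            (finrank ℂ ↥(K i) : ℚ) / (finrank ℂ V : ℚ) := by
  classical
  set n := finrank ℂ V with hn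
  set S := ∑ j, ω j * k j with hS
  refine ⟨n * S + 1, Nat.succ_pos _, ?_⟩
  intro ωi hωi K hK hss H hH0 hHT
  have hnpos : 0 < n := finrank_pos
  haveI : Nontrivial H := Submodule.nontrivial_iff_ne_bot.mpr hH0
  have hhpos : 0 < finrank ℂ H := finrank_pos
  have hhle : finrank ℂ H ≤ n := Submodule.finrank_le H
  set h := finrank ℂ H with hh
  set d := finrank ℂ ↥(K i ⊓ tensorSub W H) with hd
  rw [hK i]
  by_contra hcon
  push_neg at hcon
  rw [div_lt_div_iff₀ (by positivity) (by positivity)] at hcon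
  have hnat : k i * h + 1 ≤ d * n := by exact_mod_cast hcon
  -- semistability inequality
  have hss' := hss H hH0 hHT
  unfold slopeConfig totalConfig at hss'
  -- lower bound on slope numerator
  have hlow : (ωi : ℚ) * d ≤
      ∑ j, ((Function.update ω i ωi j : ℕ) : ℚ) *
        (finrank ℂ ↥(K j ⊓ tensorSub W H) : ℚ) := by
    have := Finset.single_le_sum
      (f := fun j => ((Function.update ω i ωi j : ℕ) : ℚ) *
        (finrank ℂ ↥(K j ⊓ tensorSub W H) : ℚ))
      (fun j _ => by positivity) (Finset.mem_univ i)
    simpa [Function.update_self] using this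
  -- upper bound on total numerator
  have hup : (∑ j, ((Function.update ω i ωi j : ℕ) : ℚ) * (finrank ℂ ↥(K j) : ℚ))
      ≤ (ωi : ℚ) * k i + (S : ℚ) := by
    rw [← Finset.add_sum_erase _ _ (Finset.mem_univ i)]
    have h1 : ((Function.update ω i ωi i : ℕ) : ℚ) * (finrank ℂ ↥(K i) : ℚ)
        = (ωi : ℚ) * k i := by simp [Function.update_self, hK i]
    rw [h1]
    gcongr
    have : (S : ℚ) = ∑ j, (ω j : ℚ) * (k j : ℚ) := by
      rw [hS]; push_cast; ring_nf
    rw [this]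
    calc ∑ j ∈ Finset.univ.erase i,
          ((Function.update ω i ωi j : ℕ) : ℚ) * (finrank ℂ ↥(K j) : ℚ)
        = ∑ j ∈ Finset.univ.erase i, (ω j : ℚ) * (k j : ℚ) := by
          apply Finset.sum_congr rfl
          intro j hj
          rw [Function.update_of_ne (Finset.ne_of_mem_erase hj), hK j]
      _ ≤ ∑ j, (ω j : ℚ) * (k j : ℚ) :=
          Finset.sum_le_sum_of_subset_of_nonneg (Finset.subset_univ _)
            (fun j _ _ => by positivity)
  -- combine
  have hA : (ωi : ℚ) * d / (h : ℚ) ≤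
      (∑ j, ((Function.update ω i ωi j : ℕ) : ℚ) *
        (finrank ℂ ↥(K j ⊓ tensorSub W H) : ℚ)) / (h : ℚ) := by
    gcongr
  have hB : (∑ j, ((Function.update ω i ωi j : ℕ) : ℚ) * (finrank ℂ ↥(K j) : ℚ)) / (n : ℚ)
      ≤ ((ωi : ℚ) * k i + (S : ℚ)) / (n : ℚ) := by
    gcongr
  have hchain : (ωi : ℚ) * d / (h : ℚ) ≤ ((ωi : ℚ) * k i + S) / (n : ℚ) :=
    (hA.trans hss').trans hB
  rw [div_le_div_iff₀ (by positivity) (by positivity)] at hchain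
  have hq : (ωi * d * n : ℕ) ≤ ((ωi * k i + S) * h : ℕ) := by exact_mod_cast hchain
  nlinarith [Nat.mul_le_mul_left ωi hnat, Nat.mul_le_mul_left S hhle,
    Nat.mul_le_mul_right h (Nat.le_refl (ωi * k i))]
end
end

section
/- Fix nonzero finite-dimensional complex vector spaces V and W, an integer m ≥ 1, an index i ∈ {1, …, m}, positive integers ω_j for all j ≠ i, and dimensions k_1, …, k_m. There exists a positive integer N such that for every integer ω_i ≥ N and every configuration K_1, …, K_m of subspaces of V⊗W with dim K_j = k_j for all j: if the single-member configuration (K_i) with weight 1 is ℘-stable, i.e. (1/dim H)·dim(K_i ∩ (H⊗W)) < (1/dim V)·dim K_i for every nonzero proper subspace H ⊊ V, then the whole configuration {K_j} is ℘_ω-stable (with weights ω_1, …, ω_m). -/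
open scoped TensorProduct
open Module

noncomputable section

variable {V : Type*} [AddCommGroup V] [Module ℂ V]

variable {W : Type*} [AddCommGroup W] [Module ℂ W]

/-- The configuration `{K_i}` is `℘_ω`-stable. -/
def ConfigStable {m : ℕ} (ω : Fin m → ℕ) (K : Fin m → Submodule ℂ (V ⊗[ℂ] W)) : Prop :=
  ∀ H : Submodule ℂ V, H ≠ ⊥ → H ≠ ⊤ → slopeConfig ω K H < totalConfig ω K

/-- Splitting off the `i`-th term of a weighted sum with updated weights. -/
lemma update_sum_split {m : ℕ} (i : Fin m) (ω : Fin m → ℕ) (ωi : ℕ) (b : Fin m → ℕ) :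
    (∑ j, ((Function.update ω i ωi j : ℕ) : ℚ) * (b j : ℚ)) =
      (ωi : ℚ) * (b i : ℚ) + ∑ j ∈ Finset.univ.erase i, (ω j : ℚ) * (b j : ℚ) := by
  rw [← Finset.add_sum_erase _ _ (Finset.mem_univ i), Function.update_self]
  congr 1
  exact Finset.sum_congr rfl fun j hj => by
    rw [Function.update_of_ne (Finset.mem_erase.1 hj).1]

theorem stmt_5 (V W : Type*) [AddCommGroup V] [Module ℂ V] [FiniteDimensional ℂ V] [Nontrivial V]
    [AddCommGroup W] [Module ℂ W] [FiniteDimensional ℂ W] [Nontrivial W]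
    (m : ℕ) (hm : 1 ≤ m) (i : Fin m) (ω : Fin m → ℕ) (hω : ∀ j, j ≠ i → 0 < ω j)
    (k : Fin m → ℕ) :
    ∃ N : ℕ, 0 < N ∧ ∀ ωi : ℕ, N ≤ ωi →
      ∀ K : Fin m → Submodule ℂ (V ⊗[ℂ] W), (∀ j, finrank ℂ ↥(K j) = k j) →
        (∀ H : Submodule ℂ V, H ≠ ⊥ → H ≠ ⊤ →
          (finrank ℂ ↥(K i ⊓ tensorSub W H) : ℚ) / (finrank ℂ ↥H : ℚ) <
            (finrank ℂ ↥(K i) : ℚ) / (finrank ℂ V : ℚ)) →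
        ConfigStable (Function.update ω i ωi) K := by
  classical
  set n := finrank ℂ V with hn
  have hn1 : 0 < n := Module.finrank_pos
  set C := ∑ j, ω j * k j with hC
  refine ⟨n * C + 1, Nat.succ_pos _, ?_⟩
  intro ωi hωi K hK hstab H hHb hHt
  have hHnt : Nontrivial H := Submodule.nontrivial_iff_ne_bot.mpr hHb
  have hh1 : 0 < finrank ℂ H := Module.finrank_pos
  have hhn : finrank ℂ H ≤ n := Submodule.finrank_le H
  set h := finrank ℂ H with hhdef
  set a : Fin m → ℕ := fun j => finrank ℂ ↥(K j ⊓ tensorSub W H) with ha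
  have haj : ∀ j, a j ≤ k j := fun j => (hK j) ▸ Submodule.finrank_mono inf_le_left
  -- key integer gap from the stability hypothesis for `K i`
  have hkey : a i * n + 1 ≤ k i * h := by
    have h0 := hstab H hHb hHt
    rw [hK i] at h0
    have h2 : (a i : ℚ) * n < (k i : ℚ) * h := by
      rw [div_lt_div_iff₀ (by exact_mod_cast hh1) (by exact_mod_cast hn1)] at h0
      exact_mod_cast h0
    have h3 : a i * n < k i * h := by exact_mod_cast h2
    omega
  -- bound on the remaining weighted sum
  have hSa : ∑ j ∈ Finset.univ.erase i, ω j * a j ≤ C := by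
    calc ∑ j ∈ Finset.univ.erase i, ω j * a j
        ≤ ∑ j ∈ Finset.univ.erase i, ω j * k j :=
          Finset.sum_le_sum fun j _ => Nat.mul_le_mul_left _ (haj j)
      _ ≤ C := Finset.sum_le_sum_of_subset (Finset.subset_univ _)
  -- the main integer inequality
  have main : (ωi * a i + ∑ j ∈ Finset.univ.erase i, ω j * a j) * n <
      (ωi * k i + ∑ j ∈ Finset.univ.erase i, ω j * k j) * h := by
    have hCn : C * n < ωi := by
      have : C * n = n * C := Nat.mul_comm _ _
      omega
    calc (ωi * a i + ∑ j ∈ Finset.univ.erase i, ω j * a j) * n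
        = ωi * (a i * n) + (∑ j ∈ Finset.univ.erase i, ω j * a j) * n := by ring
      _ ≤ ωi * (a i * n) + C * n := by
          exact Nat.add_le_add_left (Nat.mul_le_mul_right _ hSa) _
      _ < ωi * (a i * n) + ωi := Nat.add_lt_add_left hCn _
      _ = ωi * (a i * n + 1) := by ring
      _ ≤ ωi * (k i * h) := Nat.mul_le_mul_left _ hkey
      _ = (ωi * k i) * h := by ring
      _ ≤ (ωi * k i + ∑ j ∈ Finset.univ.erase i, ω j * k j) * h :=
          Nat.mul_le_mul_right _ (Nat.le_add_right _ _)
  -- transfer to ℚ and conclude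
  rw [slopeConfig, totalConfig,
    div_lt_div_iff₀ (by exact_mod_cast hh1) (by exact_mod_cast hn1)]
  have e1 := update_sum_split i ω ωi a
  have e2 := update_sum_split i ω ωi k
  simp only [ha] at e1
  simp only [hK, e2] at *
  rw [e1]
  exact_mod_cast main
end
end

section
/- For every configuration K_1, …, K_m of subspaces of V⊗W with positive integer weights ω_1, …, ω_m, define μ_max to be the maximum of ℘_ω(H) = (1/dim H)·Σ_i ω_i·dim(K_i ∩ (H⊗W)) over all nonzero subspaces H ⊆ V. Then: (a) if H and H' are nonzero subspaces with ℘_ω(H) = ℘_ω(H') = μ_max, then ℘_ω(H + H') = μ_max; (b) there exists a unique subspace V¹ ⊆ V with ℘_ω(V¹) = μ_max that contains every nonzero subspace H with ℘_ω(H) = μ_max. -/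
/-!
Write `N(H) = Σ ω_i dim (K_i ∩ H⊗W)`, so that `℘_ω(H) = N(H) / dim H`. Over a field,
`(H + H')⊗W = H⊗W + H'⊗W` and `(H ∩ H')⊗W = H⊗W ∩ H'⊗W` (the latter because both sides have
dimension `dim (H ∩ H') · dim W`), so the modular law for `dim (K_i ∩ ·)` makes `N` supermodular:
`N(H) + N(H') ≤ N(H + H') + N(H ∩ H')`. As `N ≤ μ_max · dim` everywhere, equality at `H` and `H'`
forces equality at `H + H'`. The maximizers are thus closed under sums, and since subspaces of `V`
satisfy the ascending chain condition, their supremum is itself a maximizer.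
-/

open scoped TensorProduct
open Module

noncomputable section

variable {V : Type*} [AddCommGroup V] [Module ℂ V]

variable {W : Type*} [AddCommGroup W] [Module ℂ W]

lemma Submodule.finrank_inf_add_finrank_inf_le {k M : Type*} [DivisionRing k] [AddCommGroup M]
    [Module k M] [FiniteDimensional k M] (C A B : Submodule k M) :
    finrank k ↥(C ⊓ A) + finrank k ↥(C ⊓ B) ≤
      finrank k ↥(C ⊓ (A ⊔ B)) + finrank k ↥(C ⊓ (A ⊓ B)) := by
  rw [← Submodule.finrank_sup_add_finrank_inf_eq, inf_inf_inf_comm, inf_idem]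
  exact add_le_add_left (Submodule.finrank_mono
    (sup_le (inf_le_inf_left _ le_sup_left) (inf_le_inf_left _ le_sup_right))) _

lemma SupClosed.exists_isGreatest {α : Type*} [CompleteLattice α] [WellFoundedGT α]
    {s : Set α} (hs : SupClosed s) (hne : s.Nonempty) : ∃ a, IsGreatest s a :=
  ⟨sSup s, CompleteLattice.IsSupFiniteCompact.isSupClosedCompact α
    (CompleteLattice.WellFoundedGT.isSupFiniteCompact α) s hne hs, fun _ => le_sSup⟩

lemma Submodule.eq_mul_finrank_sup_of_supermodular {k M : Type*} [DivisionRing k]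
    [AddCommGroup M] [Module k M] [FiniteDimensional k M] {f : Submodule k M → ℚ} {μ : ℚ}
    (hf : ∀ H H', f H + f H' ≤ f (H ⊔ H') + f (H ⊓ H')) (hle : ∀ H, f H ≤ μ * finrank k H)
    {H H' : Submodule k M} (hH : f H = μ * finrank k H) (hH' : f H' = μ * finrank k H') :
    f (H ⊔ H') = μ * finrank k ↥(H ⊔ H') := by
  have hdim : (finrank k ↥(H ⊔ H') : ℚ) + finrank k ↥(H ⊓ H') = finrank k H + finrank k H' := by
    exact_mod_cast Submodule.finrank_sup_add_finrank_inf_eq H H'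
  have hμdim := congrArg (μ * ·) hdim
  simp only [mul_add] at hμdim
  linarith [hf H H', hle (H ⊔ H'), hle (H ⊓ H')]

lemma tensorSub_le_iff {H : Submodule ℂ V} {P : Submodule ℂ (V ⊗[ℂ] W)} :
    tensorSub W H ≤ P ↔ ∀ h ∈ H, ∀ w : W, h ⊗ₜ w ∈ P := by
  rw [tensorSub, TensorProduct.range_map_eq_span_tmul, Submodule.span_le]
  constructor
  · intro hP h hh w
    exact hP ⟨⟨h, hh⟩, w, rfl⟩
  · rintro hP _ ⟨h, w, rfl⟩
    exact hP h h.2 w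

lemma tmul_mem_tensorSub {H : Submodule ℂ V} {h : V} (hh : h ∈ H) (w : W) :
    h ⊗ₜ w ∈ tensorSub W H :=
  ⟨⟨h, hh⟩ ⊗ₜ w, rfl⟩

lemma tensorSub_mono : Monotone (tensorSub (V := V) W) := fun _ _ hle =>
  tensorSub_le_iff.2 fun _ hh w => tmul_mem_tensorSub (hle hh) w

lemma tensorSub_bot : tensorSub W (⊥ : Submodule ℂ V) = ⊥ :=
  eq_bot_iff.2 <| tensorSub_le_iff.2 fun h hh w => by simp [(Submodule.mem_bot ℂ).1 hh]

lemma tensorSub_sup (H H' : Submodule ℂ V) :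
    tensorSub W (H ⊔ H') = tensorSub W H ⊔ tensorSub W H' := by
  refine le_antisymm (tensorSub_le_iff.2 fun h hh w => ?_)
    (sup_le (tensorSub_mono le_sup_left) (tensorSub_mono le_sup_right))
  obtain ⟨a, ha, b, hb, rfl⟩ := Submodule.mem_sup.1 hh
  rw [TensorProduct.add_tmul]
  exact Submodule.add_mem_sup (tmul_mem_tensorSub ha w) (tmul_mem_tensorSub hb w)

lemma finrank_tensorSub (H : Submodule ℂ V) :
    finrank ℂ (tensorSub W H) = finrank ℂ H * finrank ℂ W := by
  rw [tensorSub, ← LinearMap.rTensor, LinearMap.finrank_range_of_inj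
    (Module.Flat.rTensor_preserves_injective_linearMap _ H.injective_subtype),
    Module.finrank_tensorProduct]

lemma tensorSub_inf [FiniteDimensional ℂ V] [FiniteDimensional ℂ W] (H H' : Submodule ℂ V) :
    tensorSub W (H ⊓ H') = tensorSub W H ⊓ tensorSub W H' := by
  refine Submodule.eq_of_le_of_finrank_eq
    (le_inf (tensorSub_mono inf_le_left) (tensorSub_mono inf_le_right)) ?_
  have hV := Submodule.finrank_sup_add_finrank_inf_eq H H'
  have hVW := Submodule.finrank_sup_add_finrank_inf_eq (tensorSub W H) (tensorSub W H')
  rw [← tensorSub_sup, finrank_tensorSub, finrank_tensorSub, finrank_tensorSub] at hVW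
  rw [finrank_tensorSub]
  nlinarith

section Slope

variable {m : ℕ} (ω : Fin m → ℕ) (K : Fin m → Submodule ℂ (V ⊗[ℂ] W))

def weightedIntersectionDim (H : Submodule ℂ V) : ℚ :=
  ∑ i, (ω i : ℚ) * (finrank ℂ ↥(K i ⊓ tensorSub W H) : ℚ)

lemma weightedIntersectionDim_bot : weightedIntersectionDim ω K ⊥ = 0 := by
  refine Finset.sum_eq_zero fun i _ => ?_
  rw [tensorSub_bot, inf_bot_eq, finrank_bot, Nat.cast_zero, mul_zero]

lemma weightedIntersectionDim_add_le [FiniteDimensional ℂ V] [FiniteDimensional ℂ W]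
    (H H' : Submodule ℂ V) :
    weightedIntersectionDim ω K H + weightedIntersectionDim ω K H' ≤
      weightedIntersectionDim ω K (H ⊔ H') + weightedIntersectionDim ω K (H ⊓ H') := by
  simp only [weightedIntersectionDim, ← Finset.sum_add_distrib, ← mul_add]
  refine Finset.sum_le_sum fun i _ => mul_le_mul_of_nonneg_left ?_ (Nat.cast_nonneg _)
  rw [tensorSub_sup, tensorSub_inf]
  exact_mod_cast Submodule.finrank_inf_add_finrank_inf_le _ _ _

variable {ω K}

lemma slopeConfig_eq_iff [FiniteDimensional ℂ V] {H : Submodule ℂ V} (hH : H ≠ ⊥) {μ : ℚ} :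
    slopeConfig ω K H = μ ↔ weightedIntersectionDim ω K H = μ * finrank ℂ H :=
  div_eq_iff (by simpa using hH)

lemma slopeConfig_le_iff [FiniteDimensional ℂ V] {H : Submodule ℂ V} (hH : H ≠ ⊥) {μ : ℚ} :
    slopeConfig ω K H ≤ μ ↔ weightedIntersectionDim ω K H ≤ μ * finrank ℂ H :=
  div_le_iff₀ (by simpa [pos_iff_ne_zero] using hH)

lemma weightedIntersectionDim_le_of_slopeConfig_le [FiniteDimensional ℂ V] {μ : ℚ}
    (hμ : ∀ H : Submodule ℂ V, H ≠ ⊥ → slopeConfig ω K H ≤ μ) (H : Submodule ℂ V) :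
    weightedIntersectionDim ω K H ≤ μ * finrank ℂ H := by
  rcases eq_or_ne H ⊥ with rfl | hH
  · simp [weightedIntersectionDim_bot]
  · exact (slopeConfig_le_iff hH).1 (hμ H hH)

lemma slopeConfig_sup_eq [FiniteDimensional ℂ V] [FiniteDimensional ℂ W] {μ : ℚ}
    (hμ : ∀ H : Submodule ℂ V, H ≠ ⊥ → slopeConfig ω K H ≤ μ) (H H' : Submodule ℂ V)
    (hH : H ≠ ⊥) (hH' : H' ≠ ⊥) (h : slopeConfig ω K H = μ) (h' : slopeConfig ω K H' = μ) :
    slopeConfig ω K (H ⊔ H') = μ := by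
  rw [slopeConfig_eq_iff hH] at h
  rw [slopeConfig_eq_iff hH'] at h'
  rw [slopeConfig_eq_iff (ne_bot_of_le_ne_bot hH le_sup_left)]
  exact Submodule.eq_mul_finrank_sup_of_supermodular (weightedIntersectionDim_add_le ω K)
    (weightedIntersectionDim_le_of_slopeConfig_le hμ) h h'

end Slope

theorem stmt_8_general (V W : Type*) [AddCommGroup V] [Module ℂ V] [FiniteDimensional ℂ V]
    [AddCommGroup W] [Module ℂ W] [FiniteDimensional ℂ W]
    (m : ℕ) (ω : Fin m → ℕ)
    (K : Fin m → Submodule ℂ (V ⊗[ℂ] W))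
    (μmax : ℚ)
    (hub : ∀ H : Submodule ℂ V, H ≠ ⊥ → slopeConfig ω K H ≤ μmax)
    (hattained : ∃ H : Submodule ℂ V, H ≠ ⊥ ∧ slopeConfig ω K H = μmax) :
    (∀ H H' : Submodule ℂ V, H ≠ ⊥ → H' ≠ ⊥ →
      slopeConfig ω K H = μmax → slopeConfig ω K H' = μmax →
      slopeConfig ω K (H ⊔ H') = μmax) ∧
    (∃! V1 : Submodule ℂ V, slopeConfig ω K V1 = μmax ∧
      ∀ H : Submodule ℂ V, H ≠ ⊥ → slopeConfig ω K H = μmax → H ≤ V1) := by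
  have hsup := slopeConfig_sup_eq hub
  refine ⟨hsup, ?_⟩
  obtain ⟨V1, ⟨hV1, hV1μ⟩, hV1max⟩ :=
    SupClosed.exists_isGreatest (s := {H | H ≠ ⊥ ∧ slopeConfig ω K H = μmax})
      (fun H hH H' hH' => ⟨ne_bot_of_le_ne_bot hH.1 le_sup_left, hsup H H' hH.1 hH'.1 hH.2 hH'.2⟩)
      hattained
  refine ⟨V1, ⟨hV1μ, fun H hH h => hV1max ⟨hH, h⟩⟩, fun V1' ⟨hμ, hmax⟩ => ?_⟩
  have hV1le : V1 ≤ V1' := hmax V1 hV1 hV1μ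
  exact le_antisymm (hV1max ⟨ne_bot_of_le_ne_bot hV1 hV1le, hμ⟩) hV1le

/-- the maximal slope is attained on a sum of maximizers, and there is a unique
largest subspace of maximal slope containing all maximizers. -/
theorem stmt_8 (V W : Type*) [AddCommGroup V] [Module ℂ V] [FiniteDimensional ℂ V] [Nontrivial V]
    [AddCommGroup W] [Module ℂ W] [FiniteDimensional ℂ W] [Nontrivial W]
    (m : ℕ) (hm : 1 ≤ m) (ω : Fin m → ℕ) (hω : ∀ i, 0 < ω i)
    (K : Fin m → Submodule ℂ (V ⊗[ℂ] W))
    (μmax : ℚ)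
    (hub : ∀ H : Submodule ℂ V, H ≠ ⊥ → slopeConfig ω K H ≤ μmax)
    (hattained : ∃ H : Submodule ℂ V, H ≠ ⊥ ∧ slopeConfig ω K H = μmax) :
    (∀ H H' : Submodule ℂ V, H ≠ ⊥ → H' ≠ ⊥ →
      slopeConfig ω K H = μmax → slopeConfig ω K H' = μmax →
      slopeConfig ω K (H ⊔ H') = μmax) ∧
    (∃! V1 : Submodule ℂ V, slopeConfig ω K V1 = μmax ∧
      ∀ H : Submodule ℂ V, H ≠ ⊥ → slopeConfig ω K H = μmax → H ≤ V1) :=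
  stmt_8_general V W m ω K μmax hub hattained
end
end

section
/- Let {K_i} be a ℘_ω-semistable configuration of subspaces of V⊗W and suppose H ⊊ V is a nonzero proper subspace with ℘_ω(H) = ℘_ω({K_i}) that is maximal with this property, i.e. there is no proper subspace H' ⊊ V with H ⊊ H' and ℘_ω(H') = ℘_ω({K_i}). Then the quotient configuration of {K_i} on V/H is ℘_ω-stable and its normalized total weighted dimension (1/dim(V/H))·Σ_i ω_i·dim Q_i equals ℘_ω({K_i}), where Q_i is the image of K_i under the induced map V⊗W → (V/H)⊗W. -/
open scoped TensorProduct
open Module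

noncomputable section

variable {V : Type*} [AddCommGroup V] [Module ℂ V]

variable {W : Type*} [AddCommGroup W] [Module ℂ W]

/-! The projection `V → V/H` induces `π = mkQ ⊗ id_W`, whose kernel is `H ⊗ W` by right exactness
of `⊗ W`; for `S ⊆ V/H` with preimage `H' ⊆ V`, the preimage of `S ⊗ W` under `π` is `H' ⊗ W`.
Hence `dim (π K_i ∩ S ⊗ W) = dim (K_i ∩ H' ⊗ W) - dim (K_i ∩ H ⊗ W)` and `dim S = dim H' - dim H`.
As `H` has slope exactly `t = ℘_ω({K_i})`, the quotient configuration has total slope `t`, and `S`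
has slope `< t` exactly when `H'` does, which holds for `H ⊊ H' ⊊ V` by semistability together
with the maximality of `H`. -/

theorem Submodule.finrank_map_add_finrank_inf_ker {K M N : Type*} [DivisionRing K]
    [AddCommGroup M] [Module K M] [AddCommGroup N] [Module K N] [FiniteDimensional K M]
    (f : M →ₗ[K] N) (p : Submodule K M) :
    finrank K (p.map f) + finrank K ↥(p ⊓ LinearMap.ker f) = finrank K p := by
  have h := LinearMap.finrank_range_add_finrank_ker (f.domRestrict p)
  rwa [LinearMap.range_domRestrict, LinearMap.ker_domRestrict,
    show (LinearMap.ker f).comap p.subtype = (p ⊓ LinearMap.ker f).comap p.subtype by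
      simp [Submodule.comap_inf],
    (Submodule.comapSubtypeEquivOfLe inf_le_left).finrank_eq] at h

theorem Submodule.finrank_add_finrank_eq_finrank_comap_mkQ {K M : Type*} [DivisionRing K]
    [AddCommGroup M] [Module K M] [FiniteDimensional K M] (H : Submodule K M)
    (S : Submodule K (M ⧸ H)) :
    finrank K S + finrank K H = finrank K (S.comap H.mkQ) := by
  have h := Submodule.finrank_map_add_finrank_inf_ker H.mkQ (S.comap H.mkQ)
  rwa [Submodule.map_comap_eq_of_surjective H.mkQ_surjective, Submodule.ker_mkQ,
    inf_eq_right.mpr (H.le_comap_mkQ S)] at h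

theorem Submodule.lt_comap_mkQ {R M : Type*} [Ring R] [AddCommGroup M] [Module R M]
    {H : Submodule R M} {S : Submodule R (M ⧸ H)} (hS : S ≠ ⊥) : H < S.comap H.mkQ := by
  have h := (Submodule.comap_lt_comap_iff_of_surjective H.mkQ_surjective).mpr hS.bot_lt
  rwa [Submodule.comap_bot, Submodule.ker_mkQ] at h

theorem Submodule.comap_mkQ_ne_top {R M : Type*} [Ring R] [AddCommGroup M] [Module R M]
    {H : Submodule R M} {S : Submodule R (M ⧸ H)} (hS : S ≠ ⊤) : S.comap H.mkQ ≠ ⊤ := by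
  rw [← Submodule.comap_top H.mkQ]
  exact (Submodule.comap_injective_of_surjective H.mkQ_surjective).ne hS

theorem ker_rTensor_eq_tensorSub {U : Type*} [AddCommGroup U] [Module ℂ U] (f : V →ₗ[ℂ] U)
    (hf : Function.Surjective f) :
    LinearMap.ker (f.rTensor W) = tensorSub W (LinearMap.ker f) :=
  LinearMap.exact_iff.mp (rTensor_exact W (LinearMap.exact_subtype_ker_map f) hf)

theorem tensorSub_top : tensorSub W (⊤ : Submodule ℂ V) = ⊤ :=
  LinearMap.range_eq_top.mpr <| LinearMap.rTensor_surjective W fun x ↦ ⟨⟨x, trivial⟩, rfl⟩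

theorem tensorSub_mono_s11 {H H' : Submodule ℂ V} (h : H ≤ H') : tensorSub W H ≤ tensorSub W H' := by
  rw [tensorSub, tensorSub, ← Submodule.subtype_comp_inclusion H H' h,
    ← LinearMap.rTensor_def, ← LinearMap.rTensor_def, LinearMap.rTensor_comp]
  exact LinearMap.range_comp_le_range _ _

theorem comap_rTensor_mkQ_tensorSub (H : Submodule ℂ V) (S : Submodule ℂ (V ⧸ H)) :
    (tensorSub W S).comap (H.mkQ.rTensor W) = tensorSub W (S.comap H.mkQ) := by
  have hsurj : Function.Surjective (S.mkQ ∘ₗ H.mkQ) := S.mkQ_surjective.comp H.mkQ_surjective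
  rw [← Submodule.ker_mkQ S, ← ker_rTensor_eq_tensorSub S.mkQ S.mkQ_surjective,
    ← LinearMap.ker_comp, ← LinearMap.rTensor_comp, ker_rTensor_eq_tensorSub _ hsurj,
    LinearMap.ker_comp]

theorem finrank_map_rTensor_mkQ_inf_add [FiniteDimensional ℂ V] [FiniteDimensional ℂ W]
    (K : Submodule ℂ (V ⊗[ℂ] W)) (H : Submodule ℂ V) (S : Submodule ℂ (V ⧸ H)) :
    finrank ℂ ↥(K.map (H.mkQ.rTensor W) ⊓ tensorSub W S) + finrank ℂ ↥(K ⊓ tensorSub W H) =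
      finrank ℂ ↥(K ⊓ tensorSub W (S.comap H.mkQ)) := by
  have hker : LinearMap.ker (H.mkQ.rTensor W) = tensorSub W H := rTensor_mkQ W H
  have h := Submodule.finrank_map_add_finrank_inf_ker (H.mkQ.rTensor W)
    (K ⊓ tensorSub W (S.comap H.mkQ))
  rw [hker, inf_assoc, inf_eq_right.mpr (tensorSub_mono_s11 (H.le_comap_mkQ S))] at h
  rwa [Submodule.map_inf_eq_map_inf_comap, comap_rTensor_mkQ_tensorSub]

def weightedDim {m : ℕ} (ω : Fin m → ℕ) (K : Fin m → Submodule ℂ (V ⊗[ℂ] W))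
    (H : Submodule ℂ V) : ℚ :=
  ∑ i, (ω i : ℚ) * finrank ℂ ↥(K i ⊓ tensorSub W H)

def quotientConfig {m : ℕ} (K : Fin m → Submodule ℂ (V ⊗[ℂ] W)) (H : Submodule ℂ V) :
    Fin m → Submodule ℂ ((V ⧸ H) ⊗[ℂ] W) :=
  fun i ↦ (K i).map (H.mkQ.rTensor W)

section

variable {m : ℕ} (ω : Fin m → ℕ) (K : Fin m → Submodule ℂ (V ⊗[ℂ] W))

theorem weightedDim_top : weightedDim ω K ⊤ = ∑ i, (ω i : ℚ) * finrank ℂ ↥(K i) := by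
  refine Finset.sum_congr rfl fun i _ ↦ ?_
  rw [tensorSub_top, inf_top_eq]

theorem slopeConfig_eq_weightedDim_div (H : Submodule ℂ V) :
    slopeConfig ω K H = weightedDim ω K H / finrank ℂ H :=
  rfl

theorem totalConfig_eq_weightedDim_top_div : totalConfig ω K = weightedDim ω K ⊤ / finrank ℂ V := by
  rw [weightedDim_top, totalConfig]

variable [FiniteDimensional ℂ V] [FiniteDimensional ℂ W] {H : Submodule ℂ V}

theorem weightedDim_quotientConfig (S : Submodule ℂ (V ⧸ H)) :
    weightedDim ω (quotientConfig K H) S + weightedDim ω K H =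
      weightedDim ω K (S.comap H.mkQ) := by
  unfold weightedDim
  rw [← Finset.sum_add_distrib]
  refine Finset.sum_congr rfl fun i _ ↦ ?_
  rw [← finrank_map_rTensor_mkQ_inf_add (K i) H S, Nat.cast_add, mul_add]
  rfl

theorem totalConfig_quotientConfig (hH0 : H ≠ ⊥) (hHt : H ≠ ⊤)
    (hH : slopeConfig ω K H = totalConfig ω K) :
    totalConfig ω (quotientConfig K H) = totalConfig ω K := by
  set t := totalConfig ω K
  have hHpos : (0 : ℚ) < finrank ℂ H := by exact_mod_cast Submodule.one_le_finrank_iff.mpr hH0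
  have hHV : (finrank ℂ H : ℚ) < finrank ℂ V := by exact_mod_cast Submodule.finrank_lt hHt
  have hquot : (finrank ℂ (V ⧸ H) : ℚ) + finrank ℂ H = finrank ℂ V := by
    exact_mod_cast H.finrank_quotient_add_finrank
  have hwH : weightedDim ω K H = t * finrank ℂ H := (div_eq_iff hHpos.ne').mp hH
  have hwV : weightedDim ω K ⊤ = t * finrank ℂ V :=
    (div_eq_iff (by linarith)).mp (totalConfig_eq_weightedDim_top_div ω K).symm
  have hwQ := weightedDim_quotientConfig ω K (⊤ : Submodule ℂ (V ⧸ H))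
  rw [Submodule.comap_top, hwH, hwV, ← hquot] at hwQ
  rw [totalConfig_eq_weightedDim_top_div, div_eq_iff (by linarith)]
  linarith

theorem slopeConfig_quotientConfig_lt {t : ℚ} (hH0 : H ≠ ⊥) (hH : slopeConfig ω K H = t)
    {S : Submodule ℂ (V ⧸ H)} (hS0 : S ≠ ⊥) (hlt : slopeConfig ω K (S.comap H.mkQ) < t) :
    slopeConfig ω (quotientConfig K H) S < t := by
  have hHpos : (0 : ℚ) < finrank ℂ H := by exact_mod_cast Submodule.one_le_finrank_iff.mpr hH0
  have hSpos : (0 : ℚ) < finrank ℂ S := by exact_mod_cast Submodule.one_le_finrank_iff.mpr hS0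
  have hdim : (finrank ℂ S : ℚ) + finrank ℂ H = finrank ℂ (S.comap H.mkQ) := by
    exact_mod_cast H.finrank_add_finrank_eq_finrank_comap_mkQ S
  have hwH : weightedDim ω K H = t * finrank ℂ H := (div_eq_iff hHpos.ne').mp hH
  have hwS : weightedDim ω K (S.comap H.mkQ) < t * finrank ℂ S + t * finrank ℂ H := by
    rw [← mul_add, hdim]
    exact (div_lt_iff₀ (by linarith)).mp hlt
  have hwQ := weightedDim_quotientConfig ω K S
  rw [slopeConfig_eq_weightedDim_div, div_lt_iff₀ hSpos]
  linarith

end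

theorem stmt_11_general (V W : Type*) [AddCommGroup V] [Module ℂ V] [FiniteDimensional ℂ V]
    [AddCommGroup W] [Module ℂ W] [FiniteDimensional ℂ W]
    (m : ℕ) (ω : Fin m → ℕ)
    (K : Fin m → Submodule ℂ (V ⊗[ℂ] W))
    (hss : ∀ H : Submodule ℂ V, H ≠ ⊥ → H ≠ ⊤ → slopeConfig ω K H ≤ totalConfig ω K)
    (H : Submodule ℂ V) (hH0 : H ≠ ⊥) (hHt : H ≠ ⊤)
    (hHeq : slopeConfig ω K H = totalConfig ω K)
    (hmax : ¬ ∃ H' : Submodule ℂ V, H < H' ∧ H' ≠ ⊤ ∧ slopeConfig ω K H' = totalConfig ω K)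
    (Q : Fin m → Submodule ℂ ((V ⧸ H) ⊗[ℂ] W))
    (hQ : ∀ i, Q i = Submodule.map
      (TensorProduct.map H.mkQ (LinearMap.id : W →ₗ[ℂ] W)) (K i)) :
    (∀ S : Submodule ℂ (V ⧸ H), S ≠ ⊥ → S ≠ ⊤ →
      (∑ i, (ω i : ℚ) * (finrank ℂ ↥(Q i ⊓ tensorSub W S) : ℚ)) / (finrank ℂ ↥S : ℚ) <
        (∑ i, (ω i : ℚ) * (finrank ℂ ↥(Q i) : ℚ)) / (finrank ℂ (V ⧸ H) : ℚ)) ∧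
    (∑ i, (ω i : ℚ) * (finrank ℂ ↥(Q i) : ℚ)) / (finrank ℂ (V ⧸ H) : ℚ) =
      totalConfig ω K := by
  obtain rfl : Q = quotientConfig K H := funext hQ
  have htot := totalConfig_quotientConfig ω K hH0 hHt hHeq
  refine ⟨fun S hS0 hSt ↦ ?_, htot⟩
  have hHS := Submodule.lt_comap_mkQ hS0
  have hSH := Submodule.comap_mkQ_ne_top hSt
  have hslope : slopeConfig ω K (S.comap H.mkQ) < totalConfig ω K :=
    (hss _ (bot_le.trans_lt hHS).ne' hSH).lt_of_ne fun h ↦ hmax ⟨_, hHS, hSH, h⟩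
  change slopeConfig ω _ S < totalConfig ω _
  rw [htot]
  exact slopeConfig_quotientConfig_lt ω K hH0 hHeq hS0 hslope

/-- if `H` is maximal among proper subspaces with `℘_ω(H) = ℘_ω({K_i})` in a
semistable configuration, then the quotient configuration on `V/H` is `℘_ω`-stable with the
same normalized total weighted dimension. -/
theorem stmt_11 (V W : Type*) [AddCommGroup V] [Module ℂ V] [FiniteDimensional ℂ V] [Nontrivial V]
    [AddCommGroup W] [Module ℂ W] [FiniteDimensional ℂ W] [Nontrivial W]
    (m : ℕ) (hm : 1 ≤ m) (ω : Fin m → ℕ) (hω : ∀ i, 0 < ω i)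
    (K : Fin m → Submodule ℂ (V ⊗[ℂ] W))
    (hss : ∀ H : Submodule ℂ V, H ≠ ⊥ → H ≠ ⊤ → slopeConfig ω K H ≤ totalConfig ω K)
    (H : Submodule ℂ V) (hH0 : H ≠ ⊥) (hHt : H ≠ ⊤)
    (hHeq : slopeConfig ω K H = totalConfig ω K)
    (hmax : ¬ ∃ H' : Submodule ℂ V, H < H' ∧ H' ≠ ⊤ ∧ slopeConfig ω K H' = totalConfig ω K)
    (Q : Fin m → Submodule ℂ ((V ⧸ H) ⊗[ℂ] W))
    (hQ : ∀ i, Q i = Submodule.map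
      (TensorProduct.map H.mkQ (LinearMap.id : W →ₗ[ℂ] W)) (K i)) :
    (∀ S : Submodule ℂ (V ⧸ H), S ≠ ⊥ → S ≠ ⊤ →
      (∑ i, (ω i : ℚ) * (finrank ℂ ↥(Q i ⊓ tensorSub W S) : ℚ)) / (finrank ℂ ↥S : ℚ) <
        (∑ i, (ω i : ℚ) * (finrank ℂ ↥(Q i) : ℚ)) / (finrank ℂ (V ⧸ H) : ℚ)) ∧
    (∑ i, (ω i : ℚ) * (finrank ℂ ↥(Q i) : ℚ)) / (finrank ℂ (V ⧸ H) : ℚ) =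
      totalConfig ω K :=
  stmt_11_general V W m ω K hss H hH0 hHt hHeq hmax Q hQ
end
end

section
/- Let V_1, …, V_m be subspaces of a nonzero finite-dimensional complex vector space V with positive integer weights ω_1, …, ω_m, and suppose the configuration {V_i} is ℘_ω-semistable. Suppose V = H_1 ⊕ ⋯ ⊕ H_l is a direct-sum decomposition into nonzero subspaces such that V_i = ⊕_{q=1}^l (V_i ∩ H_q) for every i. Then for every q, the normalized total weighted dimension (1/dim H_q)·Σ_{i=1}^m ω_i·dim(V_i ∩ H_q) of the induced subconfiguration {V_i ∩ H_q} equals ℘_ω({V_i}) = (1/dim V)·Σ_i ω_i·dim V_i; in particular, each induced configuration {V_i ∩ H_q} of subspaces of H_q is ℘_ω-semistable. -/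
/-!
Both sides of a compatible decomposition carry the same total: dimensions and weighted
dimensions are additive over `V = ⊕ H_q`, and `V_i = ⊕ (V_i ∩ H_q)`, so summing the weighted
dimensions of the `H_q` gives `℘_ω({V_i}) · dim V = ℘_ω({V_i}) · Σ dim H_q`. Semistability bounds
each summand by `℘_ω({V_i}) · dim H_q`, hence every bound is an equality. Semistability of the
induced configuration on `H_q` is then semistability of `{V_i}` tested on subspaces of `H_q`.
-/

open Module

noncomputable section

variable {V : Type*} [AddCommGroup V] [Module ℂ V]

/-- `℘_ω(H) = (1/dim H)·Σ_i ω_i·dim(V_i ∩ H)` for a configuration of subspaces of `V`. -/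
def slopeSub {m : ℕ} (ω : Fin m → ℕ) (Vc : Fin m → Submodule ℂ V) (H : Submodule ℂ V) : ℚ :=
  (∑ i, (ω i : ℚ) * (finrank ℂ ↥(Vc i ⊓ H) : ℚ)) / (finrank ℂ ↥H : ℚ)

/-- `℘_ω({V_i}) = (1/dim V)·Σ_i ω_i·dim V_i`. -/
def totalSub {m : ℕ} (ω : Fin m → ℕ) (Vc : Fin m → Submodule ℂ V) : ℚ :=
  (∑ i, (ω i : ℚ) * (finrank ℂ ↥(Vc i) : ℚ)) / (finrank ℂ V : ℚ)

/-- The configuration `{V_i}` is `℘_ω`-semistable. -/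
def SubSemistable {m : ℕ} (ω : Fin m → ℕ) (Vc : Fin m → Submodule ℂ V) : Prop :=
  ∀ H : Submodule ℂ V, H ≠ ⊥ → H ≠ ⊤ → slopeSub ω Vc H ≤ totalSub ω Vc

/-- The configuration `{V_i}` is `℘_ω`-stable. -/
def SubStable {m : ℕ} (ω : Fin m → ℕ) (Vc : Fin m → Submodule ℂ V) : Prop :=
  ∀ H : Submodule ℂ V, H ≠ ⊥ → H ≠ ⊤ → slopeSub ω Vc H < totalSub ω Vc

theorem iSupIndep.finrank_iSup {K W ι : Type*} [DivisionRing K] [AddCommGroup W] [Module K W]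
    [FiniteDimensional K W] [Fintype ι] {p : ι → Submodule K W} (hp : iSupIndep p) :
    finrank K ↥(⨆ i, p i) = ∑ i, finrank K ↥(p i) := by
  classical
  rw [Submodule.iSup_eq_range_dfinsupp_lsum,
    LinearMap.finrank_range_of_inj hp.dfinsupp_lsum_injective]
  exact finrank_directSum K fun i => p i

theorem Submodule.cast_finrank_pos {K W : Type*} [DivisionRing K] [AddCommGroup W] [Module K W]
    [FiniteDimensional K W] {H : Submodule K W} (hH : H ≠ ⊥) : (0 : ℚ) < finrank K ↥H := by
  exact_mod_cast Submodule.one_le_finrank_iff.mpr hH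

section WeightedFinrank

variable {K W : Type*} [DivisionRing K] [AddCommGroup W] [Module K W] {m : ℕ}
  (ω : Fin m → ℕ) (Vc : Fin m → Submodule K W)

def weightedFinrank (H : Submodule K W) : ℚ :=
  ∑ i, (ω i : ℚ) * finrank K ↥(Vc i ⊓ H)

theorem weightedFinrank_top :
    weightedFinrank ω Vc ⊤ = ∑ i, (ω i : ℚ) * finrank K ↥(Vc i) :=
  Finset.sum_congr rfl fun i _ => by rw [inf_top_eq]

theorem sum_weightedFinrank_of_iSupIndep [FiniteDimensional K W] {ι : Type*} [Fintype ι]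
    {H : ι → Submodule K W} (hind : iSupIndep H) (hdecomp : ∀ i, Vc i = ⨆ q, Vc i ⊓ H q) :
    ∑ q, weightedFinrank ω Vc (H q) = weightedFinrank ω Vc ⊤ := by
  have hfinrank (i : Fin m) : (finrank K ↥(Vc i) : ℚ) = ∑ q, (finrank K ↥(Vc i ⊓ H q) : ℚ) := by
    rw [hdecomp i, (hind.mono fun q => inf_le_right).finrank_iSup, ← hdecomp i, Nat.cast_sum]
  rw [weightedFinrank_top]
  simp only [weightedFinrank, hfinrank, Finset.mul_sum]
  exact Finset.sum_comm

end WeightedFinrank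

section Semistable

variable {m : ℕ} {ω : Fin m → ℕ} {Vc : Fin m → Submodule ℂ V}

theorem totalSub_eq_weightedFinrank_top :
    totalSub ω Vc = weightedFinrank ω Vc ⊤ / finrank ℂ V := by
  rw [weightedFinrank_top]; rfl

theorem slopeSub_top : slopeSub ω Vc ⊤ = totalSub ω Vc := by
  rw [totalSub_eq_weightedFinrank_top, ← finrank_top ℂ V]; rfl

theorem SubSemistable.slopeSub_le (hss : SubSemistable ω Vc) {H : Submodule ℂ V} (hH : H ≠ ⊥) :
    slopeSub ω Vc H ≤ totalSub ω Vc := by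
  rcases eq_or_ne H ⊤ with rfl | hH'
  · exact slopeSub_top.le
  · exact hss H hH hH'

theorem SubSemistable.weightedFinrank_le [FiniteDimensional ℂ V] (hss : SubSemistable ω Vc)
    {H : Submodule ℂ V} (hH : H ≠ ⊥) : weightedFinrank ω Vc H ≤ totalSub ω Vc * finrank ℂ H :=
  (div_le_iff₀ (Submodule.cast_finrank_pos hH)).mp (hss.slopeSub_le hH)

end Semistable

theorem stmt_12_general (V : Type*) [AddCommGroup V] [Module ℂ V] [FiniteDimensional ℂ V] [Nontrivial V]
    (m : ℕ) (ω : Fin m → ℕ)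
    (Vc : Fin m → Submodule ℂ V) (hss : SubSemistable ω Vc)
    (l : ℕ) (H : Fin l → Submodule ℂ V) (hH0 : ∀ q, H q ≠ ⊥)
    (hind : iSupIndep H) (hsup : ⨆ q, H q = ⊤)
    (hdecomp : ∀ i, Vc i = ⨆ q, Vc i ⊓ H q) :
    ∀ q : Fin l,
      (∑ i, (ω i : ℚ) * (finrank ℂ ↥(Vc i ⊓ H q) : ℚ)) / (finrank ℂ ↥(H q) : ℚ) =
        totalSub ω Vc ∧
      (∀ S : Submodule ℂ V, S ≠ ⊥ → S < H q →
        (∑ i, (ω i : ℚ) * (finrank ℂ ↥(Vc i ⊓ H q ⊓ S) : ℚ)) / (finrank ℂ ↥S : ℚ) ≤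
          (∑ i, (ω i : ℚ) * (finrank ℂ ↥(Vc i ⊓ H q) : ℚ)) / (finrank ℂ ↥(H q) : ℚ)) := by
  have hsum : ∑ q, weightedFinrank ω Vc (H q) = ∑ q, totalSub ω Vc * finrank ℂ ↥(H q) := by
    have hV : (finrank ℂ V : ℚ) ≠ 0 := by exact_mod_cast finrank_pos.ne'
    rw [sum_weightedFinrank_of_iSupIndep ω Vc hind hdecomp, ← Finset.mul_sum, ← Nat.cast_sum,
      ← hind.finrank_iSup, hsup, finrank_top, totalSub_eq_weightedFinrank_top,
      div_mul_cancel₀ _ hV]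
  have heq := (Finset.sum_eq_sum_iff_of_le fun q _ => hss.weightedFinrank_le (hH0 q)).mp hsum
  intro q
  have hslope : weightedFinrank ω Vc (H q) / finrank ℂ ↥(H q) = totalSub ω Vc := by
    rw [heq q (Finset.mem_univ q),
      mul_div_cancel_right₀ _ (Submodule.cast_finrank_pos (hH0 q)).ne']
  refine ⟨hslope, fun S hS hSq => ?_⟩
  have hVS (i : Fin m) : Vc i ⊓ H q ⊓ S = Vc i ⊓ S := by rw [inf_assoc, inf_eq_right.mpr hSq.le]
  calc _ = slopeSub ω Vc S := by
        unfold slopeSub; congr 1; exact Finset.sum_congr rfl fun i _ => by rw [hVS i]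
    _ ≤ totalSub ω Vc := hss.slopeSub_le hS
    _ = _ := hslope.symm

/-- in a semistable configuration, any compatible direct-sum decomposition has
all its summands of the same normalized total weighted dimension; in particular each induced
configuration is semistable. -/
theorem stmt_12 (V : Type*) [AddCommGroup V] [Module ℂ V] [FiniteDimensional ℂ V] [Nontrivial V]
    (m : ℕ) (hm : 1 ≤ m) (ω : Fin m → ℕ) (hω : ∀ i, 0 < ω i)
    (Vc : Fin m → Submodule ℂ V) (hss : SubSemistable ω Vc)
    (l : ℕ) (H : Fin l → Submodule ℂ V) (hH0 : ∀ q, H q ≠ ⊥)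
    (hind : iSupIndep H) (hsup : ⨆ q, H q = ⊤)
    (hdecomp : ∀ i, Vc i = ⨆ q, Vc i ⊓ H q) :
    ∀ q : Fin l,
      (∑ i, (ω i : ℚ) * (finrank ℂ ↥(Vc i ⊓ H q) : ℚ)) / (finrank ℂ ↥(H q) : ℚ) =
        totalSub ω Vc ∧
      (∀ S : Submodule ℂ V, S ≠ ⊥ → S < H q →
        (∑ i, (ω i : ℚ) * (finrank ℂ ↥(Vc i ⊓ H q ⊓ S) : ℚ)) / (finrank ℂ ↥S : ℚ) ≤
          (∑ i, (ω i : ℚ) * (finrank ℂ ↥(Vc i ⊓ H q) : ℚ)) / (finrank ℂ ↥(H q) : ℚ)) :=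
  stmt_12_general V m ω Vc hss l H hH0 hind hsup hdecomp
end
end

section
/- Let n, m, k_1, …, k_m be positive integers with n < K := k_1 + ⋯ + k_m. Write ℂ^K = E_1 ⊕ ⋯ ⊕ E_m with E_i ≅ ℂ^{k_i} the coordinate summands, let π_i : ℂ^K → E_i be the coordinate projections, and let G' ⊆ GL(K,ℂ) be the subgroup of invertible linear maps preserving each E_i (block-diagonal transformations). Let X₀ be the set of m-tuples (V_1, …, V_m) of subspaces of ℂⁿ with dim V_i = k_i for all i and V_1 + ⋯ + V_m = ℂⁿ, acted on diagonally by GL(n,ℂ), and let Y₀ be the set of n-dimensional subspaces U ⊆ ℂ^K with π_i(U) = E_i for every i, acted on by G'. Then there is a bijection between the set of GL(n,ℂ)-orbits on X₀ and the set of G'-orbits on Y₀; explicitly, for every surjective linear map M : ℂ^K → ℂⁿ whose restriction to each E_i is injective, the GL(n,ℂ)-orbit of (M(E_1), …, M(E_m)) corresponds under this bijection to the G'-orbit of the image of the transpose matrix Mᵀ : ℂⁿ → ℂ^K. -/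
open Module

noncomputable section

/-- The `i`-th coordinate summand `E_i ≅ ℂ^{k_i}` of `ℂ^K = ℂ^{k_1} ⊕ ⋯ ⊕ ℂ^{k_m}`:
functions supported on the `i`-th block of coordinates. -/
def blockSub (m : ℕ) (k : Fin m → ℕ) (i : Fin m) :
    Submodule ℂ ((j : Fin m) × Fin (k j) → ℂ) :=
  ⨅ (j : (j : Fin m) × Fin (k j)) (_ : j.1 ≠ i), LinearMap.ker (LinearMap.proj j)

/-- The coordinate projection `π_i : ℂ^K → ℂ^K` onto the `i`-th block. -/
def blockProj (m : ℕ) (k : Fin m → ℕ) (i : Fin m) :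
    ((j : Fin m) × Fin (k j) → ℂ) →ₗ[ℂ] ((j : Fin m) × Fin (k j) → ℂ) :=
  LinearMap.pi fun j => if j.1 = i then LinearMap.proj j else 0

/-- Membership in `X₀`: an `m`-tuple of subspaces of `ℂⁿ` with `dim V_i = k_i` and
`V_1 + ⋯ + V_m = ℂⁿ`. -/
def memX (n m : ℕ) (k : Fin m → ℕ) (x : Fin m → Submodule ℂ (Fin n → ℂ)) : Prop :=
  (∀ i, finrank ℂ ↥(x i) = k i) ∧ ⨆ i, x i = ⊤

/-- Membership in `Y₀`: an `n`-dimensional subspace `U ⊆ ℂ^K` with `π_i(U) = E_i` for all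
`i`. -/
def memY (n m : ℕ) (k : Fin m → ℕ) (U : Submodule ℂ ((j : Fin m) × Fin (k j) → ℂ)) : Prop :=
  finrank ℂ ↥U = n ∧ ∀ i, Submodule.map (blockProj m k i) U = blockSub m k i

/-- The `GL(n,ℂ)`-orbit equivalence on tuples of subspaces of `ℂⁿ`. -/
def relX (n m : ℕ) (x x' : Fin m → Submodule ℂ (Fin n → ℂ)) : Prop :=
  ∃ g : (Fin n → ℂ) ≃ₗ[ℂ] (Fin n → ℂ),
    ∀ i, Submodule.map (g : (Fin n → ℂ) →ₗ[ℂ] (Fin n → ℂ)) (x i) = x' i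

/-- The `G'`-orbit equivalence on subspaces of `ℂ^K`, where `G' ⊆ GL(K,ℂ)` consists of the
invertible block-diagonal transformations, i.e. those preserving every `E_i`. -/
def relY (m : ℕ) (k : Fin m → ℕ)
    (U U' : Submodule ℂ ((j : Fin m) × Fin (k j) → ℂ)) : Prop :=
  ∃ g : ((j : Fin m) × Fin (k j) → ℂ) ≃ₗ[ℂ] ((j : Fin m) × Fin (k j) → ℂ),
    (∀ i, Submodule.map
        (g : ((j : Fin m) × Fin (k j) → ℂ) →ₗ[ℂ] ((j : Fin m) × Fin (k j) → ℂ))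
        (blockSub m k i) = blockSub m k i) ∧
    Submodule.map
      (g : ((j : Fin m) × Fin (k j) → ℂ) →ₗ[ℂ] ((j : Fin m) × Fin (k j) → ℂ)) U = U'

/-- The linear map `ℂⁿ → ℂ^K` given by the transpose of the matrix of
`M : ℂ^K → ℂⁿ` in the standard bases. -/
def transposeMap (n m : ℕ) (k : Fin m → ℕ)
    (M : ((j : Fin m) × Fin (k j) → ℂ) →ₗ[ℂ] (Fin n → ℂ)) :
    (Fin n → ℂ) →ₗ[ℂ] ((j : Fin m) × Fin (k j) → ℂ) :=
  Matrix.toLin' ((LinearMap.toMatrix' M).transpose)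


namespace GMaux


set_option linter.unusedSectionVars false

open LinearMap Submodule

variable {m : ℕ} {k : Fin m → ℕ}

def cur (m : ℕ) (k : Fin m → ℕ) :
    ((j : Fin m) × Fin (k j) → ℂ) ≃ₗ[ℂ] ((i : Fin m) → Fin (k i) → ℂ) :=
  LinearEquiv.piCurry ℂ (fun _ _ => ℂ)

def bi (m : ℕ) (k : Fin m → ℕ) (i : Fin m) :
    (Fin (k i) → ℂ) →ₗ[ℂ] ((j : Fin m) × Fin (k j) → ℂ) :=
  (cur m k).symm.toLinearMap ∘ₗ LinearMap.single ℂ (fun i => Fin (k i) → ℂ) i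

def bp (m : ℕ) (k : Fin m → ℕ) (i : Fin m) :
    ((j : Fin m) × Fin (k j) → ℂ) →ₗ[ℂ] (Fin (k i) → ℂ) :=
  (LinearMap.proj i) ∘ₗ (cur m k).toLinearMap

theorem bi_apply (i : Fin m) (v : Fin (k i) → ℂ) (j : (j : Fin m) × Fin (k j)) :
    bi m k i v j = (Pi.single i v : (i' : Fin m) → Fin (k i') → ℂ) j.1 j.2 := by
  simp [bi, cur, Sigma.uncurry]

theorem bp_apply (i : Fin m) (w : (j : Fin m) × Fin (k j) → ℂ) (a : Fin (k i)) :
    bp m k i w a = w ⟨i, a⟩ := by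
  simp [bp, cur, Sigma.curry]

theorem bp_bi_same (i : Fin m) (v : Fin (k i) → ℂ) : bp m k i (bi m k i v) = v := by
  funext a; rw [bp_apply, bi_apply]; simp

theorem bp_bi_ne {i j : Fin m} (h : j ≠ i) (v : Fin (k j) → ℂ) :
    bp m k i (bi m k j v) = 0 := by
  funext a; rw [Pi.zero_apply, bp_apply, bi_apply]
  rw [Pi.single_eq_of_ne (Ne.symm h)]; rfl

theorem sum_bi_bp (w : (j : Fin m) × Fin (k j) → ℂ) :
    ∑ i, bi m k i (bp m k i w) = w := by
  funext j
  rw [Finset.sum_apply]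
  have h1 : ∀ i, bi m k i (bp m k i w) j
      = (Pi.single i (fun a => w ⟨i, a⟩) : (i : Fin m) → Fin (k i) → ℂ) j.1 j.2 := by
    intro i
    have hb : bp m k i w = fun a => w ⟨i, a⟩ := funext (bp_apply i w)
    rw [bi_apply, hb]
  rw [Finset.sum_congr rfl fun i _ => h1 i, Finset.sum_eq_single j.1]
  · simp
  · intro b _ hb
    rw [Pi.single_eq_of_ne (Ne.symm hb)]; rfl
  · intro h; exact absurd (Finset.mem_univ _) h

theorem bi_injective (i : Fin m) : Function.Injective (bi m k i) := by
  intro v v' h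
  have h2 := congrArg (bp m k i) h
  rwa [bp_bi_same, bp_bi_same] at h2

theorem ext_bi {N : Type*} [AddCommGroup N] [Module ℂ N]
    {F G : ((j : Fin m) × Fin (k j) → ℂ) →ₗ[ℂ] N}
    (h : ∀ i, F ∘ₗ bi m k i = G ∘ₗ bi m k i) : F = G := by
  apply LinearMap.ext; intro w
  rw [← sum_bi_bp w, map_sum, map_sum]
  exact Finset.sum_congr rfl fun i _ => LinearMap.congr_fun (h i) _

theorem mem_blockSub_iff {i : Fin m} {w : (j : Fin m) × Fin (k j) → ℂ} :
    w ∈ blockSub m k i ↔ ∀ j : (j : Fin m) × Fin (k j), j.1 ≠ i → w j = 0 := by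
  simp [blockSub, Submodule.mem_iInf, LinearMap.mem_ker]

theorem range_bi (i : Fin m) : LinearMap.range (bi m k i) = blockSub m k i := by
  apply le_antisymm
  · rintro _ ⟨v, rfl⟩
    rw [mem_blockSub_iff]
    intro j hj
    rw [bi_apply, Pi.single_eq_of_ne hj]; rfl
  · intro w hw
    rw [mem_blockSub_iff] at hw
    refine ⟨bp m k i w, ?_⟩
    have h0 : ∀ b : Fin m, b ≠ i → bi m k b (bp m k b w) = 0 := by
      intro b hb
      have hz : bp m k b w = 0 := by
        funext a; rw [bp_apply]; exact hw ⟨b, a⟩ hb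
      rw [hz, map_zero]
    calc bi m k i (bp m k i w)
        = ∑ j, bi m k j (bp m k j w) :=
          (Finset.sum_eq_single i (fun b _ hb => h0 b hb)
            (fun h => absurd (Finset.mem_univ _) h)).symm
      _ = w := sum_bi_bp w

theorem finrank_blockSub (i : Fin m) : finrank ℂ (blockSub m k i) = k i := by
  rw [← range_bi, LinearMap.finrank_range_of_inj (bi_injective i), Module.finrank_fin_fun]

theorem iSup_blockSub : ⨆ i, blockSub m k i = ⊤ := by
  rw [eq_top_iff]
  intro w _
  rw [← sum_bi_bp w]
  exact Submodule.sum_mem _ fun i _ =>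
    Submodule.mem_iSup_of_mem i (range_bi i ▸ LinearMap.mem_range_self _ _)

theorem blockProj_apply (i : Fin m) (w : (j : Fin m) × Fin (k j) → ℂ)
    (a : (j : Fin m) × Fin (k j)) :
    blockProj m k i w a = if a.1 = i then w a else 0 := by
  simp only [blockProj, LinearMap.pi_apply]
  by_cases h : a.1 = i <;> simp [h]

theorem blockProj_eq (i : Fin m) : blockProj m k i = bi m k i ∘ₗ bp m k i := by
  apply LinearMap.ext; intro w
  funext a
  rw [blockProj_apply, LinearMap.comp_apply, bi_apply]
  obtain ⟨a1, a2⟩ := a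
  by_cases h : a1 = i
  · subst h
    simp only [if_true, Pi.single_eq_same]
    exact (bp_apply a1 w a2).symm
  · simp [h, Pi.single_eq_of_ne h]

theorem range_blockProj (i : Fin m) :
    LinearMap.range (blockProj m k i) = blockSub m k i := by
  rw [blockProj_eq, ← range_bi i]
  apply le_antisymm
  · rw [LinearMap.range_comp]
    calc Submodule.map (bi m k i) (LinearMap.range (bp m k i))
        ≤ Submodule.map (bi m k i) ⊤ := Submodule.map_mono le_top
      _ = LinearMap.range (bi m k i) := by rw [Submodule.map_top]
  · rintro _ ⟨v, rfl⟩
    exact ⟨bi m k i v, by rw [LinearMap.comp_apply, bp_bi_same]⟩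





variable {ι κ σ : Type*} [Fintype ι] [Fintype κ] [Fintype σ]
  [DecidableEq ι] [DecidableEq κ] [DecidableEq σ]

def T (f : (ι → ℂ) →ₗ[ℂ] (κ → ℂ)) : (κ → ℂ) →ₗ[ℂ] (ι → ℂ) :=
  Matrix.toLin' (LinearMap.toMatrix' f).transpose

theorem T_comp (f : (κ → ℂ) →ₗ[ℂ] (σ → ℂ)) (g : (ι → ℂ) →ₗ[ℂ] (κ → ℂ)) :
    T (f ∘ₗ g) = T g ∘ₗ T f := by
  simp [T, LinearMap.toMatrix'_comp, Matrix.transpose_mul, Matrix.toLin'_mul]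

theorem T_T (f : (ι → ℂ) →ₗ[ℂ] (κ → ℂ)) : T (T f) = f := by
  simp [T, LinearMap.toMatrix'_toLin', Matrix.transpose_transpose, Matrix.toLin'_toMatrix']

theorem T_id : T (LinearMap.id : (ι → ℂ) →ₗ[ℂ] (ι → ℂ)) = LinearMap.id := by
  simp [T]

theorem toLin'_eq_mulVecLin (A : Matrix κ ι ℂ) : Matrix.toLin' A = A.mulVecLin := by
  apply LinearMap.ext; intro v
  simp [Matrix.toLin'_apply, Matrix.mulVecLin_apply]

theorem finrank_range_T (f : (ι → ℂ) →ₗ[ℂ] (κ → ℂ)) :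
    finrank ℂ (LinearMap.range (T f)) = finrank ℂ (LinearMap.range f) := by
  have h := Matrix.rank_transpose (LinearMap.toMatrix' f)
  rw [Matrix.rank, Matrix.rank] at h
  rw [T, toLin'_eq_mulVecLin, h, ← toLin'_eq_mulVecLin, Matrix.toLin'_toMatrix']

def Tequiv (e : (ι → ℂ) ≃ₗ[ℂ] (ι → ℂ)) : (ι → ℂ) ≃ₗ[ℂ] (ι → ℂ) :=
  LinearEquiv.ofLinear (T e.toLinearMap) (T e.symm.toLinearMap)
    (by rw [← T_comp, show (e.symm.toLinearMap ∘ₗ e.toLinearMap) = LinearMap.id from by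
          ext v; simp, T_id])
    (by rw [← T_comp, show (e.toLinearMap ∘ₗ e.symm.toLinearMap) = LinearMap.id from by
          ext v; simp, T_id])

theorem Tequiv_coe (e : (ι → ℂ) ≃ₗ[ℂ] (ι → ℂ)) :
    (Tequiv e).toLinearMap = T e.toLinearMap := rfl







theorem T_blockProj (i : Fin m) : T (blockProj m k i) = blockProj m k i := by
  have hsym : (LinearMap.toMatrix' (blockProj m k i)).transpose
      = LinearMap.toMatrix' (blockProj m k i) := by
    funext a b
    rw [Matrix.transpose_apply]
    rw [LinearMap.toMatrix'_apply, LinearMap.toMatrix'_apply]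
    rw [blockProj_apply, blockProj_apply]
    by_cases hab : a = b
    · subst hab; rfl
    · have hba : ¬ b = a := fun hh => hab hh.symm
      simp [hab, hba]
  rw [T, hsym, Matrix.toLin'_toMatrix']

theorem blockProj_apply_mem {i : Fin m} {x : (j : Fin m) × Fin (k j) → ℂ}
    (hx : x ∈ blockSub m k i) : blockProj m k i x = x := by
  funext a
  rw [blockProj_apply]
  rw [mem_blockSub_iff] at hx
  by_cases h : a.1 = i
  · rw [if_pos h]
  · rw [if_neg h, hx a h]

theorem blockProj_apply_mem_ne {i j : Fin m} {x : (j' : Fin m) × Fin (k j') → ℂ}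
    (hx : x ∈ blockSub m k j) (hij : j ≠ i) : blockProj m k i x = 0 := by
  funext a
  rw [blockProj_apply]
  rw [mem_blockSub_iff] at hx
  by_cases h : a.1 = i
  · have ha : a.1 ≠ j := by rw [h]; exact Ne.symm hij
    rw [if_pos h, hx a ha]
    rfl
  · rw [if_neg h]; rfl

theorem commutes_of_maps (e : ((j : Fin m) × Fin (k j) → ℂ) ≃ₗ[ℂ] ((j : Fin m) × Fin (k j) → ℂ))
    (h : ∀ i, Submodule.map (e : ((j : Fin m) × Fin (k j) → ℂ) →ₗ[ℂ] _) (blockSub m k i) ≤ blockSub m k i)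
    (i : Fin m) :
    blockProj m k i ∘ₗ (e : ((j : Fin m) × Fin (k j) → ℂ) →ₗ[ℂ] _)
      = (e : ((j : Fin m) × Fin (k j) → ℂ) →ₗ[ℂ] _) ∘ₗ blockProj m k i := by
  apply ext_bi
  intro j
  apply LinearMap.ext; intro v
  have hmem : e (bi m k j v) ∈ blockSub m k j :=
    h j ⟨bi m k j v, (range_bi j).le (LinearMap.mem_range_self _ _), rfl⟩
  have hmem2 : bi m k j v ∈ blockSub m k j := (range_bi j).le (LinearMap.mem_range_self _ _)
  simp only [LinearMap.comp_apply, LinearEquiv.coe_coe]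
  by_cases hji : j = i
  · subst hji
    rw [blockProj_apply_mem hmem, blockProj_apply_mem hmem2]
  · rw [blockProj_apply_mem_ne hmem hji, blockProj_apply_mem_ne hmem2 hji, map_zero]

theorem map_blockSub_of_commutes
    (e : ((j : Fin m) × Fin (k j) → ℂ) ≃ₗ[ℂ] ((j : Fin m) × Fin (k j) → ℂ))
    (h : ∀ i, blockProj m k i ∘ₗ (e : ((j : Fin m) × Fin (k j) → ℂ) →ₗ[ℂ] _)
      = (e : ((j : Fin m) × Fin (k j) → ℂ) →ₗ[ℂ] _) ∘ₗ blockProj m k i)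
    (i : Fin m) :
    Submodule.map (e : ((j : Fin m) × Fin (k j) → ℂ) →ₗ[ℂ] _) (blockSub m k i)
      = blockSub m k i := by
  calc Submodule.map (e : ((j : Fin m) × Fin (k j) → ℂ) →ₗ[ℂ] _) (blockSub m k i)
      = Submodule.map (e : ((j : Fin m) × Fin (k j) → ℂ) →ₗ[ℂ] _)
          (LinearMap.range (blockProj m k i)) := by rw [range_blockProj]
    _ = LinearMap.range ((e : ((j : Fin m) × Fin (k j) → ℂ) →ₗ[ℂ] _) ∘ₗ blockProj m k i) := by
          rw [LinearMap.range_comp]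
    _ = LinearMap.range (blockProj m k i ∘ₗ (e : ((j : Fin m) × Fin (k j) → ℂ) →ₗ[ℂ] _)) := by
          rw [h i]
    _ = Submodule.map (blockProj m k i) (LinearMap.range (e : ((j : Fin m) × Fin (k j) → ℂ) →ₗ[ℂ] _)) := by
          rw [LinearMap.range_comp]
    _ = Submodule.map (blockProj m k i) ⊤ := by rw [LinearEquiv.range]
    _ = LinearMap.range (blockProj m k i) := by rw [Submodule.map_top]
    _ = blockSub m k i := range_blockProj i

section helpers

variable {A B : Type*} [AddCommGroup A] [Module ℂ A] [AddCommGroup B] [Module ℂ B]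

theorem inj_of_finrank [FiniteDimensional ℂ A] (f : A →ₗ[ℂ] B)
    (h : finrank ℂ (LinearMap.range f) = finrank ℂ A) : Function.Injective f := by
  rw [← LinearMap.ker_eq_bot]
  have h2 := LinearMap.finrank_range_add_finrank_ker f
  rw [h] at h2
  have h3 : finrank ℂ (LinearMap.ker f) = 0 := by omega
  exact Submodule.finrank_eq_zero.mp h3

theorem surj_of_finrank [FiniteDimensional ℂ B] (f : A →ₗ[ℂ] B)
    (h : finrank ℂ (LinearMap.range f) = finrank ℂ B) : Function.Surjective f := by
  rw [← LinearMap.range_eq_top]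
  exact Submodule.eq_top_of_finrank_eq h

theorem exists_equiv_of_range_eq (f g : A →ₗ[ℂ] B) (hf : Function.Injective f)
    (hg : Function.Injective g) (h : LinearMap.range f = LinearMap.range g) :
    ∃ e : A ≃ₗ[ℂ] A, g ∘ₗ (e : A →ₗ[ℂ] A) = f := by
  refine ⟨(LinearEquiv.ofInjective f hf).trans
    ((LinearEquiv.ofEq _ _ h).trans (LinearEquiv.ofInjective g hg).symm), ?_⟩
  apply LinearMap.ext; intro a
  simp only [LinearMap.comp_apply, LinearEquiv.coe_coe, LinearEquiv.trans_apply]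
  have key : ∀ y : LinearMap.range g, g ((LinearEquiv.ofInjective g hg).symm y) = (y : B) := by
    intro y
    conv_rhs => rw [← (LinearEquiv.ofInjective g hg).apply_symm_apply y]
    rw [LinearEquiv.ofInjective_apply]
  rw [key]
  rfl

theorem map_symm_eq {e : A ≃ₗ[ℂ] B} {p : Submodule ℂ A} {q : Submodule ℂ B}
    (h : Submodule.map (e : A →ₗ[ℂ] B) p = q) :
    Submodule.map (e.symm : B →ₗ[ℂ] A) q = p := by
  subst h
  rw [← Submodule.map_comp]
  convert Submodule.map_id p using 2
  apply LinearMap.ext; intro a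
  simp

end helpers




set_option linter.unusedSectionVars false
set_option maxHeartbeats 1000000

variable {n m : ℕ} {k : Fin m → ℕ}

theorem memY_of_aux (M : ((j : Fin m) × Fin (k j) → ℂ) →ₗ[ℂ] (Fin n → ℂ))
    (hsurj : Function.Surjective M)
    (hrk : ∀ i, finrank ℂ (Submodule.map M (blockSub m k i)) = k i) :
    memY n m k (LinearMap.range (T M)) := by
  constructor
  · rw [finrank_range_T, LinearMap.range_eq_top.mpr hsurj, finrank_top, Module.finrank_fin_fun]
  · intro i
    have hle : Submodule.map (blockProj m k i) (LinearMap.range (T M)) ≤ blockSub m k i := by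
      rintro _ ⟨w, hw, rfl⟩
      rw [← range_blockProj]
      exact LinearMap.mem_range_self _ _
    have h1 : Submodule.map (blockProj m k i) (LinearMap.range (T M))
        = LinearMap.range (blockProj m k i ∘ₗ T M) := (LinearMap.range_comp _ _).symm
    have h2 : blockProj m k i ∘ₗ T M = T (M ∘ₗ blockProj m k i) := by
      rw [T_comp, T_blockProj]
    have hfr : finrank ℂ (Submodule.map (blockProj m k i) (LinearMap.range (T M))) = k i := by
      rw [h1, h2, finrank_range_T, LinearMap.range_comp, range_blockProj, hrk i]
    exact Submodule.eq_of_le_of_finrank_eq hle (by rw [hfr, finrank_blockSub])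

theorem memX_of_aux (M : ((j : Fin m) × Fin (k j) → ℂ) →ₗ[ℂ] (Fin n → ℂ))
    (hsurj : Function.Surjective M)
    (hrk : ∀ i, finrank ℂ (Submodule.map M (blockSub m k i)) = k i) :
    memX n m k (fun i => Submodule.map M (blockSub m k i)) := by
  refine ⟨hrk, ?_⟩
  show ⨆ i, Submodule.map M (blockSub m k i) = ⊤
  rw [← Submodule.map_iSup, iSup_blockSub, Submodule.map_top,
    LinearMap.range_eq_top.mpr hsurj]

theorem hrk_of_injOn (M : ((j : Fin m) × Fin (k j) → ℂ) →ₗ[ℂ] (Fin n → ℂ)) (i : Fin m)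
    (hinj : Set.InjOn M (blockSub m k i)) :
    finrank ℂ (Submodule.map M (blockSub m k i)) = k i := by
  have hinj2 : Function.Injective (M ∘ₗ bi m k i) := by
    intro v v' h
    apply bi_injective i
    refine hinj ?_ ?_ h
    · exact (range_bi i).le (LinearMap.mem_range_self _ _)
    · exact (range_bi i).le (LinearMap.mem_range_self _ _)
  rw [← range_bi i, ← LinearMap.range_comp, LinearMap.finrank_range_of_inj hinj2,
    Module.finrank_fin_fun]

theorem exists_M_of_memX {x : Fin m → Submodule ℂ (Fin n → ℂ)} (hx : memX n m k x) :
    ∃ M : ((j : Fin m) × Fin (k j) → ℂ) →ₗ[ℂ] (Fin n → ℂ),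
      Function.Surjective M ∧ ∀ i, Submodule.map M (blockSub m k i) = x i := by
  have hfe : ∀ i, finrank ℂ (Fin (k i) → ℂ) = finrank ℂ (x i) := by
    intro i; rw [Module.finrank_fin_fun, hx.1 i]
  let e : (i : Fin m) → (Fin (k i) → ℂ) ≃ₗ[ℂ] x i :=
    fun i => LinearEquiv.ofFinrankEq _ _ (hfe i)
  let M : ((j : Fin m) × Fin (k j) → ℂ) →ₗ[ℂ] (Fin n → ℂ) :=
    ∑ i, (x i).subtype ∘ₗ (e i).toLinearMap ∘ₗ bp m k i
  have hMbi : ∀ j, M ∘ₗ bi m k j = (x j).subtype ∘ₗ (e j).toLinearMap := by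
    intro j
    apply LinearMap.ext; intro v
    simp only [M, LinearMap.sum_apply, LinearMap.comp_apply]
    rw [Finset.sum_eq_single j]
    · rw [bp_bi_same]
    · intro b _ hb
      rw [bp_bi_ne (Ne.symm hb), map_zero, map_zero]
    · intro h; exact absurd (Finset.mem_univ _) h
  have hmap : ∀ j, Submodule.map M (blockSub m k j) = x j := by
    intro j
    rw [← range_bi, ← LinearMap.range_comp, hMbi j, LinearMap.range_comp,
      LinearEquiv.range, Submodule.map_top, Submodule.range_subtype]
  refine ⟨M, ?_, hmap⟩
  rw [← LinearMap.range_eq_top, eq_top_iff, ← hx.2, iSup_le_iff]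
  intro i
  rw [← hmap i]
  rintro _ ⟨w, hw, rfl⟩
  exact LinearMap.mem_range_self _ _

theorem exists_M_of_memY {U : Submodule ℂ ((j : Fin m) × Fin (k j) → ℂ)}
    (hU : memY n m k U) :
    ∃ M : ((j : Fin m) × Fin (k j) → ℂ) →ₗ[ℂ] (Fin n → ℂ),
      Function.Surjective M ∧ LinearMap.range (T M) = U ∧
      ∀ i, finrank ℂ (Submodule.map M (blockSub m k i)) = k i := by
  have hfe : finrank ℂ (Fin n → ℂ) = finrank ℂ U := by
    rw [Module.finrank_fin_fun, hU.1]
  let eU : (Fin n → ℂ) ≃ₗ[ℂ] U := LinearEquiv.ofFinrankEq _ _ hfe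
  let N : (Fin n → ℂ) →ₗ[ℂ] ((j : Fin m) × Fin (k j) → ℂ) := U.subtype ∘ₗ eU.toLinearMap
  have hNinj : Function.Injective N := by
    intro a b h
    exact eU.injective (Subtype.ext h)
  have hNrange : LinearMap.range N = U := by
    rw [LinearMap.range_comp, LinearEquiv.range, Submodule.map_top, Submodule.range_subtype]
  refine ⟨T N, ?_, ?_, ?_⟩
  · apply surj_of_finrank
    rw [finrank_range_T, hNrange, hU.1, Module.finrank_fin_fun]
  · rw [T_T, hNrange]
  · intro i
    have h1 : Submodule.map (T N) (blockSub m k i)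
        = LinearMap.range (T N ∘ₗ blockProj m k i) := by
      rw [LinearMap.range_comp, range_blockProj]
    have h2 : T N ∘ₗ blockProj m k i = T (blockProj m k i ∘ₗ N) := by
      rw [T_comp, T_blockProj]
    rw [h1, h2, finrank_range_T, LinearMap.range_comp, hNrange, hU.2 i, finrank_blockSub]


theorem relY_of_relX {x x' : Fin m → Submodule ℂ (Fin n → ℂ)}
    (M M' : ((j : Fin m) × Fin (k j) → ℂ) →ₗ[ℂ] (Fin n → ℂ))
    (hM : ∀ i, Submodule.map M (blockSub m k i) = x i)
    (hM' : ∀ i, Submodule.map M' (blockSub m k i) = x' i)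
    (hx' : ∀ i, finrank ℂ (x' i) = k i)
    (g : (Fin n → ℂ) ≃ₗ[ℂ] (Fin n → ℂ))
    (hg : ∀ i, Submodule.map (g : (Fin n → ℂ) →ₗ[ℂ] (Fin n → ℂ)) (x i) = x' i) :
    relY m k (LinearMap.range (T M)) (LinearMap.range (T M')) := by
  let A : (i : Fin m) → (Fin (k i) → ℂ) →ₗ[ℂ] (Fin n → ℂ) :=
    fun i => (g.toLinearMap ∘ₗ M) ∘ₗ bi m k i
  let B : (i : Fin m) → (Fin (k i) → ℂ) →ₗ[ℂ] (Fin n → ℂ) :=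
    fun i => M' ∘ₗ bi m k i
  have hrangeA : ∀ i, LinearMap.range (A i) = x' i := by
    intro i
    show LinearMap.range ((g.toLinearMap ∘ₗ M) ∘ₗ bi m k i) = x' i
    rw [LinearMap.range_comp, range_bi, Submodule.map_comp, hM i, hg i]
  have hrangeB : ∀ i, LinearMap.range (B i) = x' i := by
    intro i
    show LinearMap.range (M' ∘ₗ bi m k i) = x' i
    rw [LinearMap.range_comp, range_bi, hM' i]
  have hinjA : ∀ i, Function.Injective (A i) := fun i =>
    inj_of_finrank _ (by rw [hrangeA i, hx' i, Module.finrank_fin_fun])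
  have hinjB : ∀ i, Function.Injective (B i) := fun i =>
    inj_of_finrank _ (by rw [hrangeB i, hx' i, Module.finrank_fin_fun])
  have hee : ∀ i, ∃ e : (Fin (k i) → ℂ) ≃ₗ[ℂ] (Fin (k i) → ℂ), B i ∘ₗ (e : _ →ₗ[ℂ] _) = A i :=
    fun i => exists_equiv_of_range_eq (A i) (B i) (hinjA i) (hinjB i)
      (by rw [hrangeA i, hrangeB i])
  choose e he using hee
  let H : ((j : Fin m) × Fin (k j) → ℂ) ≃ₗ[ℂ] ((j : Fin m) × Fin (k j) → ℂ) :=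
    (cur m k).trans ((LinearEquiv.piCongrRight e).trans (cur m k).symm)
  have hHbi : ∀ j, (H : _ →ₗ[ℂ] _) ∘ₗ bi m k j = bi m k j ∘ₗ (e j).toLinearMap := by
    intro j
    apply LinearMap.ext; intro v
    have h1 : cur m k (bi m k j v) = Pi.single j v := by
      simp [bi]
    have h2 : LinearEquiv.piCongrRight e (Pi.single j v)
        = Pi.single j (e j v) := by
      funext i
      rw [LinearEquiv.piCongrRight_apply]
      by_cases hij : i = j
      · subst hij; rw [Pi.single_eq_same, Pi.single_eq_same]
      · rw [Pi.single_eq_of_ne hij, Pi.single_eq_of_ne hij, map_zero]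
    show H (bi m k j v) = bi m k j (e j v)
    simp only [H, LinearEquiv.trans_apply, h1, h2]
    simp [bi]
  have hMH : M' ∘ₗ (H : _ →ₗ[ℂ] _) = g.toLinearMap ∘ₗ M := by
    apply ext_bi; intro j
    apply LinearMap.ext; intro v
    have h1 : H (bi m k j v) = bi m k j (e j v) := LinearMap.congr_fun (hHbi j) v
    have h2 : B j ((e j) v) = A j v := LinearMap.congr_fun (he j) v
    show M' (H (bi m k j v)) = g (M (bi m k j v))
    rw [h1]
    exact h2
  have hHblocks : ∀ i, Submodule.map (H : _ →ₗ[ℂ] _) (blockSub m k i) = blockSub m k i := by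
    intro i
    rw [← range_bi, ← LinearMap.range_comp, hHbi i, LinearMap.range_comp,
      LinearEquiv.range, Submodule.map_top, range_bi]
  have hHcomm : ∀ i, blockProj m k i ∘ₗ (H : _ →ₗ[ℂ] _)
      = (H : _ →ₗ[ℂ] _) ∘ₗ blockProj m k i :=
    commutes_of_maps H (fun i => (hHblocks i).le)
  have hTHcomm : ∀ i, blockProj m k i ∘ₗ (Tequiv H : _ →ₗ[ℂ] _)
      = (Tequiv H : _ →ₗ[ℂ] _) ∘ₗ blockProj m k i := by
    intro i
    have h := congrArg T (hHcomm i)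
    rw [T_comp, T_comp, T_blockProj] at h
    exact h.symm
  have hTHblocks := map_blockSub_of_commutes (Tequiv H) hTHcomm
  have htrans : T (H : _ →ₗ[ℂ] _) ∘ₗ T M' = T M ∘ₗ T g.toLinearMap := by
    have h := congrArg T hMH
    rw [T_comp, T_comp] at h
    exact h
  have hmapU : Submodule.map ((Tequiv H : _ →ₗ[ℂ] _))
      (LinearMap.range (T M')) = LinearMap.range (T M) := by
    show Submodule.map (T (H : _ →ₗ[ℂ] _)) (LinearMap.range (T M')) = LinearMap.range (T M)
    rw [← LinearMap.range_comp, htrans, LinearMap.range_comp]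
    have hTg : LinearMap.range (T g.toLinearMap) = ⊤ :=
      LinearMap.range_eq_top.mpr (Tequiv g).surjective
    rw [hTg, Submodule.map_top]
  exact ⟨(Tequiv H).symm, fun i => map_symm_eq (hTHblocks i), map_symm_eq hmapU⟩

theorem relX_of_relY {x x' : Fin m → Submodule ℂ (Fin n → ℂ)}
    (M M' : ((j : Fin m) × Fin (k j) → ℂ) →ₗ[ℂ] (Fin n → ℂ))
    (hMsurj : Function.Surjective M) (hM'surj : Function.Surjective M')
    (hM : ∀ i, Submodule.map M (blockSub m k i) = x i)
    (hM' : ∀ i, Submodule.map M' (blockSub m k i) = x' i)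
    (f : ((j : Fin m) × Fin (k j) → ℂ) ≃ₗ[ℂ] ((j : Fin m) × Fin (k j) → ℂ))
    (hfblocks : ∀ i, Submodule.map (f : _ →ₗ[ℂ] _) (blockSub m k i) = blockSub m k i)
    (hfU : Submodule.map (f : _ →ₗ[ℂ] _) (LinearMap.range (T M)) = LinearMap.range (T M')) :
    relX n m x x' := by
  have hNinj : Function.Injective (T M) :=
    inj_of_finrank _ (by
      rw [finrank_range_T, LinearMap.range_eq_top.mpr hMsurj, finrank_top])
  have hN'inj : Function.Injective (T M') :=
    inj_of_finrank _ (by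
      rw [finrank_range_T, LinearMap.range_eq_top.mpr hM'surj, finrank_top])
  have hcompinj : Function.Injective (f.toLinearMap ∘ₗ T M) := by
    intro a b h
    exact hNinj (f.injective h)
  have hrange : LinearMap.range (f.toLinearMap ∘ₗ T M) = LinearMap.range (T M') := by
    rw [LinearMap.range_comp, hfU]
  obtain ⟨e, he⟩ := exists_equiv_of_range_eq (T M') (f.toLinearMap ∘ₗ T M)
    hN'inj hcompinj hrange.symm
  have hM'eq : M' = T (e : _ →ₗ[ℂ] _) ∘ₗ (M ∘ₗ T f.toLinearMap) := by
    have h := congrArg T he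
    rw [T_comp, T_comp, T_T, T_T] at h
    exact h.symm
  have hfcomm : ∀ i, blockProj m k i ∘ₗ (f : _ →ₗ[ℂ] _)
      = (f : _ →ₗ[ℂ] _) ∘ₗ blockProj m k i :=
    commutes_of_maps f (fun i => (hfblocks i).le)
  have hTfcomm : ∀ i, blockProj m k i ∘ₗ (Tequiv f : _ →ₗ[ℂ] _)
      = (Tequiv f : _ →ₗ[ℂ] _) ∘ₗ blockProj m k i := by
    intro i
    have h := congrArg T (hfcomm i)
    rw [T_comp, T_comp, T_blockProj] at h
    exact h.symm
  have hTfblocks : ∀ i, Submodule.map (T f.toLinearMap) (blockSub m k i) = blockSub m k i :=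
    map_blockSub_of_commutes (Tequiv f) hTfcomm
  refine ⟨Tequiv e, fun i => ?_⟩
  show Submodule.map (T (e : _ →ₗ[ℂ] _)) (x i) = x' i
  rw [← hM i, ← hM' i, hM'eq]
  rw [Submodule.map_comp, Submodule.map_comp, hTfblocks i]

end GMaux

/-- generalized Gelfand–MacPherson correspondence: bijection between
`GL(n,ℂ)`-orbits of spanning configurations `(V_1,…,V_m)` of subspaces of `ℂⁿ` with
`dim V_i = k_i` and `G'`-orbits of `n`-dimensional subspaces `U ⊆ ℂ^K` with `π_i(U) = E_i`,
matching the orbit of `(M(E_1),…,M(E_m))` with the orbit of the row space of `M`. -/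
theorem stmt_16 (n m : ℕ) (hn : 0 < n) (hm : 0 < m) (k : Fin m → ℕ) (hk : ∀ i, 0 < k i)
    (hnK : n < ∑ i, k i) :
    ∃ Φ : {x : Fin m → Submodule ℂ (Fin n → ℂ) // memX n m k x} →
          {U : Submodule ℂ ((j : Fin m) × Fin (k j) → ℂ) // memY n m k U},
      (∀ x x', relX n m x.1 x'.1 ↔ relY m k (Φ x).1 (Φ x').1) ∧
      (∀ U : {U : Submodule ℂ ((j : Fin m) × Fin (k j) → ℂ) // memY n m k U},
        ∃ x, relY m k (Φ x).1 U.1) ∧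
      (∀ M : ((j : Fin m) × Fin (k j) → ℂ) →ₗ[ℂ] (Fin n → ℂ),
        Function.Surjective M →
        (∀ i, Set.InjOn M ↑(blockSub m k i)) →
        memX n m k (fun i => Submodule.map M (blockSub m k i)) ∧
        memY n m k (LinearMap.range (transposeMap n m k M)) ∧
        ∀ x : {x : Fin m → Submodule ℂ (Fin n → ℂ) // memX n m k x},
          (∀ i, x.1 i = Submodule.map M (blockSub m k i)) →
          relY m k (Φ x).1 (LinearMap.range (transposeMap n m k M))) := by
  
  classical
  have L1 : ∀ x : {x : Fin m → Submodule ℂ (Fin n → ℂ) // memX n m k x},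
      ∃ M : ((j : Fin m) × Fin (k j) → ℂ) →ₗ[ℂ] (Fin n → ℂ),
        Function.Surjective M ∧ ∀ i, Submodule.map M (blockSub m k i) = x.1 i :=
    fun x => GMaux.exists_M_of_memX x.2
  choose Mof hMsurj hMmap using L1
  have hrk : ∀ x i, finrank ℂ (Submodule.map (Mof x) (blockSub m k i)) = k i := by
    intro x i; rw [hMmap x i]; exact x.2.1 i
  have hrefl : ∀ p : Submodule ℂ (Fin n → ℂ),
      Submodule.map ((LinearEquiv.refl ℂ (Fin n → ℂ) : _) : (Fin n → ℂ) →ₗ[ℂ] (Fin n → ℂ)) p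
        = p := by
    intro p
    rw [show ((LinearEquiv.refl ℂ (Fin n → ℂ) : _) : (Fin n → ℂ) →ₗ[ℂ] _) = LinearMap.id from rfl,
      Submodule.map_id]
  refine ⟨fun x => ⟨LinearMap.range (GMaux.T (Mof x)),
      GMaux.memY_of_aux _ (hMsurj x) (hrk x)⟩, ?_, ?_, ?_⟩
  · intro x x'
    constructor
    · rintro ⟨g, hg⟩
      exact GMaux.relY_of_relX (Mof x) (Mof x') (hMmap x) (hMmap x') x'.2.1 g hg
    · rintro ⟨f, hfblocks, hfU⟩
      exact GMaux.relX_of_relY (Mof x) (Mof x') (hMsurj x) (hMsurj x')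
        (hMmap x) (hMmap x') f hfblocks hfU
  · intro U
    obtain ⟨M₀, hs, hr, hf⟩ := GMaux.exists_M_of_memY U.2
    have hXmem : memX n m k (fun i => Submodule.map M₀ (blockSub m k i)) :=
      GMaux.memX_of_aux _ hs hf
    let X : {x : Fin m → Submodule ℂ (Fin n → ℂ) // memX n m k x} :=
      ⟨fun i => Submodule.map M₀ (blockSub m k i), hXmem⟩
    refine ⟨X, ?_⟩
    have h := GMaux.relY_of_relX (x := X.1) (x' := X.1) (Mof X) M₀ (hMmap X)
      (fun i => rfl) (fun i => hf i) (LinearEquiv.refl ℂ _) (fun i => hrefl (X.1 i))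
    rwa [hr] at h
  · intro M hsurjM hinjM
    have hrkM : ∀ i, finrank ℂ (Submodule.map M (blockSub m k i)) = k i :=
      fun i => GMaux.hrk_of_injOn M i (hinjM i)
    refine ⟨GMaux.memX_of_aux M hsurjM hrkM, GMaux.memY_of_aux M hsurjM hrkM, ?_⟩
    intro x hx
    exact GMaux.relY_of_relX (Mof x) M (hMmap x) (fun i => (hx i).symm) x.2.1
      (LinearEquiv.refl ℂ _) (fun i => hrefl _)
end
end
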